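/- If two dense lamination systems L_1 and L_2 on S^1 have disjoint endpoint sets (E(L_1) ∩ E(L_2) = ∅), then each of L_1 and L_2 is totally disconnected: every distinct pair {I,J} ⊆ L_i (disjoint intervals not forming a leaf) is separated by a non-leaf gap of L_i. -/

import Mathlib

open Set Topology

noncomputable section

/-- Stereographic projection from `1 ∈ S¹`. -/
def sproj (z : Circle) : ℝ := (z : ℂ).im / ((z : ℂ).re - 1)

/-- `(a,b,c)` is a positively oriented triple on `S¹`. -/
def posOri (a b c : Circle) : Prop :=
  a ≠ b ∧ b ≠ c ∧ c ≠ a ∧ sproj (a⁻¹ * b) < sproj (a⁻¹ * c)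

/-- The nondegenerate open interval `(u,v)` on `S¹`. -/
def oInt (u v : Circle) : Set Circle := {p | posOri u p v}

/-- `I` is a nondegenerate open interval on `S¹`. -/
def IsND (I : Set Circle) : Prop := ∃ u v : Circle, u ≠ v ∧ I = oInt u v

/-- The dual interval `I* = (v,u)` of `I = (u,v)`, i.e. the interior of the complement. -/
def dual (I : Set Circle) : Set Circle := interior Iᶜ

/-- The leaf `{I, I*}` lies on `J`. -/
def LiesOn (I J : Set Circle) : Prop := I ⊆ J ∨ dual I ⊆ J

/-- A lamination system on `S¹`. -/
structure LamSys (L : Set (Set Circle)) : Prop where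
  nonempty : L.Nonempty
  nd : ∀ I ∈ L, IsND I
  dualMem : ∀ I ∈ L, dual I ∈ L
  unlinked : ∀ I ∈ L, ∀ J ∈ L, LiesOn I J ∨ LiesOn I (dual J)
  chainUnion : ∀ f : ℕ → Set Circle, (∀ n, f n ∈ L) → (∀ n, f n ⊆ f (n + 1)) →
    IsND (⋃ n, f n) → (⋃ n, f n) ∈ L

/-- The leaf associated to an interval. -/
def leafOf (I : Set Circle) : Set (Set Circle) := {I, dual I}

/-- `liminf` of a sequence of sets. -/
def sLiminf (f : ℕ → Set Circle) : Set Circle := ⋃ k, ⋂ n, ⋂ (_ : k ≤ n), f n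

/-- `limsup` of a sequence of sets. -/
def sLimsup (f : ℕ → Set Circle) : Set Circle := ⋂ k, ⋃ n, ⋃ (_ : k ≤ n), f n

/-- The sequence of intervals converges to `J`. -/
def ConvTo (f : ℕ → Set Circle) (J : Set Circle) : Prop :=
  J ⊆ sLiminf f ∧ sLiminf f ⊆ sLimsup f ∧ sLimsup f ⊆ closure J

/-- A gap of a lamination system. -/
def IsGap (L G : Set (Set Circle)) : Prop :=
  G ⊆ L ∧ (∀ I ∈ G, ∀ J ∈ G, I ≠ J → I ∩ J = ∅) ∧ ∀ I ∈ L, ∃ J ∈ G, LiesOn I J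

/-- A gap which is a leaf. -/
def IsLeafGap (G : Set (Set Circle)) : Prop := ∃ I, G = leafOf I

/-- The vertex (endpoint) set of a gap. -/
def vset (G : Set (Set Circle)) : Set Circle := (⋃₀ G)ᶜ

/-- A very full lamination system: every gap is an ideal polygon (finite vertex set). -/
def VeryFull (L : Set (Set Circle)) : Prop := ∀ G, IsGap L G → (vset G).Finite

/-- The set of endpoints of leaves of `L`. -/
def ELset (L : Set (Set Circle)) : Set Circle := ⋃ I ∈ L, frontier I

/-- A rainbow at `p`. -/
def Rainbow (L : Set (Set Circle)) (p : Circle) (f : ℕ → Set Circle) : Prop :=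
  (∀ n, f n ∈ L) ∧ (∀ n, f (n + 1) ⊆ f n) ∧ (⋂ n, f n) = {p}

/-- An `I`-side sequence of leaves. -/
def SideSeq (L : Set (Set Circle)) (I : Set Circle) (f : ℕ → Set Circle) : Prop :=
  (∀ n, f n ∈ L) ∧ (∀ n, I ∉ leafOf (f n)) ∧ (∀ n, LiesOn (f n) I) ∧ ConvTo f I

/-- `I` is isolated in `L`. -/
def IsolatedInt (L : Set (Set Circle)) (I : Set Circle) : Prop := ∀ f, ¬ SideSeq L I f

/-- `C_p^I`. -/
def Cset (L : Set (Set Circle)) (p : Circle) (I : Set Circle) : Set (Set Circle) :=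
  {J ∈ L | p ∈ J ∧ J ⊆ I}

/-- The group of self-homeomorphisms of the circle (composition as multiplication). -/
instance : Group (Circle ≃ₜ Circle) where
  mul g h := h.trans g
  one := Homeomorph.refl _
  inv := Homeomorph.symm
  mul_assoc _ _ _ := Homeomorph.ext fun _ => rfl
  one_mul _ := Homeomorph.ext fun _ => rfl
  mul_one _ := Homeomorph.ext fun _ => rfl
  inv_mul_cancel g := Homeomorph.ext fun x => g.symm_apply_apply x

/-- An orientation-preserving homeomorphism of the circle. -/
def OrientPres (g : Circle ≃ₜ Circle) : Prop :=
  ∀ a b c, posOri a b c → posOri (g a) (g b) (g c)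

/-- `L` is invariant under a subgroup `G` of homeomorphisms. -/
def GInv (G : Subgroup (Circle ≃ₜ Circle)) (L : Set (Set Circle)) : Prop :=
  ∀ g ∈ G, ∀ I ∈ L, (⇑g) '' I ∈ L

/-- The image of a gap under a homeomorphism. -/
def gapIm (g : Circle ≃ₜ Circle) (P : Set (Set Circle)) : Set (Set Circle) :=
  (fun I => (⇑g) '' I) '' P

/-- `v_G(P)`, the union of the vertex sets of the `G`-orbit of the gap `P`. -/
def vOrb (G : Subgroup (Circle ≃ₜ Circle)) (P : Set (Set Circle)) : Set Circle :=
  ⋃ g ∈ G, vset (gapIm g P)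

/-- A loose lamination system: distinct non-leaf gaps have disjoint vertex sets. -/
def Loose (L : Set (Set Circle)) : Prop :=
  ∀ P Q, IsGap L P → IsGap L Q → ¬ IsLeafGap P → ¬ IsLeafGap Q → P ≠ Q →
    vset P ∩ vset Q = ∅

/-- A pseudo-fibered triple `(L₁, L₂, G)`. -/
structure PFib (L₁ L₂ : Set (Set Circle)) (G : Subgroup (Circle ≃ₜ Circle)) : Prop where
  orient : ∀ g ∈ G, OrientPres g
  fg : G.FG
  lam₁ : LamSys L₁
  lam₂ : LamSys L₂
  inv₁ : GInv G L₁
  inv₂ : GInv G L₂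
  veryFull₁ : VeryFull L₁
  veryFull₂ : VeryFull L₂
  loose₁ : Loose L₁
  loose₂ : Loose L₂
  disjEnds : ELset L₁ ∩ ELset L₂ = ∅

end
/-- A distinct pair of a lamination system: disjoint intervals not forming a leaf. -/
def DistinctPair (L : Set (Set Circle)) (I J : Set Circle) : Prop :=
  I ∈ L ∧ J ∈ L ∧ I ∩ J = ∅ ∧ J ≠ dual I

/-- A distinct pair is separated by a non-leaf gap. -/
def SeparatedPair (L : Set (Set Circle)) (I J : Set Circle) : Prop :=
  ∃ G, IsGap L G ∧ ¬ IsLeafGap G ∧ ∃ K ∈ G, ∃ K' ∈ G, I ⊆ K ∧ J ⊆ K'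

/-- A totally disconnected lamination system: every distinct pair is separated. -/
def TotDisc (L : Set (Set Circle)) : Prop :=
  ∀ I J, DistinctPair L I J → SeparatedPair L I J


/-!
Let `L` be a lamination system whose endpoint set `E(L)` has dense complement; for `L₁` this
follows from the density of `E(L₂)` and `E(L₁) ∩ E(L₂) = ∅`. Given a distinct pair `I, J`, pick
`q ∉ E(L)` in the open region between them. The leaves whose closure misses `q` form a laminar
family, and the union of its members through a point is connected; as `q ∉ E(L)`, it is either
a leaf whose closure misses `q` or all of `S¹ \ {q}`. If the first case holds at every point,
these unions form a non-leaf gap separating `I` and `J`. Otherwise compactness gives leaves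
`M₁ ⊊ M₂` with `I ∪ J ⊆ M₁`. Pick `q' ∉ E(L)` in `M₂ \ cl M₁` and let `Ω` be the largest leaf
between `M₁` and `M₂` whose closure misses `q'`. If `I, J` were not separated, the gap formed by
`Ω` and the unions of chains of leaves properly inside `Ω*` would be a leaf, i.e. `Ω*` would be
exhausted by proper subleaves; one of them, `C`, contains `q'` and a point of `M₂*`, and then
`C*` contradicts the maximality of `Ω`.

Intervals are handled in the stereographic charts `S¹ \ {b} ≃ ℝ`, in which an interval whose
closure misses `b` is an open interval of `ℝ`.
-/

noncomputable section

open Function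

section Stereographic

open Complex ComplexConjugate

lemma ofReal_add_I_ne_zero (s : ℝ) : (s : ℂ) + I ≠ 0 := fun h => by
  simpa using congrArg im h

/-- `s ↦ (s - i) / (s + i)`, the inverse of `sproj`. -/
def sprojInv (s : ℝ) : Circle := Circle.ofConjDivSelf (s + I) (ofReal_add_I_ne_zero s)

lemma sprojInv_re (s : ℝ) : (sprojInv s : ℂ).re = (s ^ 2 - 1) / (s ^ 2 + 1) := by
  simp [sprojInv, div_re, normSq_apply]
  field_simp
  ring

lemma sprojInv_im (s : ℝ) : (sprojInv s : ℂ).im = -(2 * s) / (s ^ 2 + 1) := by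
  simp [sprojInv, div_im, normSq_apply]
  field_simp
  ring

lemma continuous_sprojInv : Continuous sprojInv :=
  Continuous.subtype_mk ((by fun_prop : Continuous fun s : ℝ => conj ((s : ℂ) + I)).div
    (by fun_prop) ofReal_add_I_ne_zero) _

lemma sproj_sprojInv (s : ℝ) : sproj (sprojInv s) = s := by
  have : (s ^ 2 - 1) / (s ^ 2 + 1) - 1 ≠ 0 := by
    rw [div_sub_one (by positivity)]
    exact div_ne_zero (by ring_nf; norm_num) (by positivity)
  rw [sproj, sprojInv_re, sprojInv_im, div_eq_iff this]
  field_simp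
  ring

lemma re_sq_add_im_sq (z : Circle) : (z : ℂ).re ^ 2 + (z : ℂ).im ^ 2 = 1 := by
  simpa [normSq_apply, sq] using Circle.normSq_coe z

lemma re_lt_one {z : Circle} (hz : z ≠ 1) : (z : ℂ).re < 1 := by
  refine lt_of_le_of_ne (by nlinarith [re_sq_add_im_sq z]) fun h => hz ?_
  have : (z : ℂ).im = 0 := by nlinarith [re_sq_add_im_sq z]
  exact Circle.ext (Complex.ext (by simpa using h) (by simpa using this))

lemma sprojInv_sproj {z : Circle} (hz : z ≠ 1) : sprojInv (sproj z) = z := by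
  have hre : (z : ℂ).re - 1 ≠ 0 := (sub_neg.2 (re_lt_one hz)).ne
  have hsq := re_sq_add_im_sq z
  apply Circle.ext
  apply Complex.ext
  · rw [sprojInv_re, sproj]
    field_simp
    linear_combination (1 - (z : ℂ).re) * hsq
  · rw [sprojInv_im, sproj]
    field_simp
    linear_combination (-(z : ℂ).im) * hsq

lemma sprojInv_ne_one (s : ℝ) : sprojInv s ≠ 1 := fun h => by
  have := sprojInv_re s
  rw [h, Circle.coe_one, one_re, eq_div_iff (by positivity)] at this
  linarith

lemma sproj_inv (z : Circle) : sproj z⁻¹ = -sproj z := by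
  simp [sproj, neg_div]

lemma continuousAt_sproj {z : Circle} (hz : z ≠ 1) : ContinuousAt sproj z :=
  ((continuous_im.comp continuous_subtype_val).continuousAt).div
    ((continuous_re.comp continuous_subtype_val).sub continuous_const).continuousAt
    (sub_ne_zero.2 (re_lt_one hz).ne)

/-- Since `sproj (exp (iθ)) = -cot (θ / 2)`, this is the subtraction formula for `cot`. -/
def sprojTransition (s t : ℝ) : ℝ := (s * t + 1) / (s - t)

lemma sproj_inv_mul_sprojInv {s t : ℝ} (hst : s ≠ t) :
    sproj ((sprojInv s)⁻¹ * sprojInv t) = sprojTransition s t := by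
  have hs : s ^ 2 + 1 ≠ 0 := by positivity
  have ht : t ^ 2 + 1 ≠ 0 := by positivity
  simp only [sproj, sprojTransition, Circle.coe_mul, Circle.coe_inv_eq_conj, mul_re, mul_im,
    conj_re, conj_im, sprojInv_re, sprojInv_im]
  have hre : (s ^ 2 - 1) / (s ^ 2 + 1) * ((t ^ 2 - 1) / (t ^ 2 + 1)) -
      -(-(2 * s) / (s ^ 2 + 1)) * (-(2 * t) / (t ^ 2 + 1)) - 1 =
      -2 * (s - t) ^ 2 / ((s ^ 2 + 1) * (t ^ 2 + 1)) := by
    field_simp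
    ring
  rw [hre, div_eq_div_iff (by have := sub_ne_zero.2 hst; positivity) (sub_ne_zero.2 hst)]
  field_simp
  ring

end Stereographic

section Transition

variable {A B Z : ℝ}

lemma sprojTransition_lt_sprojTransition_iff (hAB : A < B) (hZA : Z ≠ A) :
    sprojTransition A Z < sprojTransition A B ↔ A < Z ∧ Z < B := by
  have key : sprojTransition A B - sprojTransition A Z =
      (A ^ 2 + 1) / (B - A) * ((B - Z) / (Z - A)) := by
    unfold sprojTransition
    field_simp [sub_ne_zero.2 hAB.ne, sub_ne_zero.2 hAB.ne', sub_ne_zero.2 hZA,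
      sub_ne_zero.2 hZA.symm]
    ring
  rw [← sub_pos, key, mul_pos_iff_of_pos_left (by have := sub_pos.2 hAB; positivity),
    div_pos_iff]
  constructor
  · rintro (⟨h1, h2⟩ | ⟨h1, h2⟩) <;> constructor <;> linarith
  · rintro ⟨h1, h2⟩
    exact Or.inl ⟨by linarith, by linarith⟩

lemma neg_sub_sprojTransition (hZA : Z ≠ A) :
    -A - sprojTransition A Z = (A ^ 2 + 1) / (Z - A) := by
  unfold sprojTransition
  field_simp [sub_ne_zero.2 hZA, sub_ne_zero.2 hZA.symm]
  ring

lemma sprojTransition_lt_neg_iff (hZA : Z ≠ A) : sprojTransition A Z < -A ↔ A < Z := by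
  rw [← sub_pos, neg_sub_sprojTransition hZA, div_pos_iff_of_pos_left (by positivity), sub_pos]

lemma neg_lt_sprojTransition_iff (hZA : Z ≠ A) : -A < sprojTransition A Z ↔ Z < A := by
  have : 0 < A ^ 2 + 1 := by positivity
  rw [← sub_neg, neg_sub_sprojTransition hZA, div_neg_iff]
  constructor
  · rintro (⟨-, h⟩ | ⟨h, -⟩) <;> linarith
  · exact fun h => Or.inl ⟨this, by linarith⟩

end Transition

def sprojAt (b z : Circle) : ℝ := sproj (b⁻¹ * z)

def sprojInvAt (b : Circle) (s : ℝ) : Circle := b * sprojInv s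

section Charts

variable {b u v p z : Circle} {A B : ℝ}

@[simp]
lemma sprojAt_sprojInvAt (b : Circle) (s : ℝ) : sprojAt b (sprojInvAt b s) = s := by
  rw [sprojAt, sprojInvAt, inv_mul_cancel_left, sproj_sprojInv]

lemma sprojInvAt_sprojAt (hz : z ≠ b) : sprojInvAt b (sprojAt b z) = z := by
  rw [sprojInvAt, sprojAt, sprojInv_sproj fun h => hz (inv_mul_eq_one.1 h).symm,
    mul_inv_cancel_left]

lemma sprojInvAt_ne (b : Circle) (s : ℝ) : sprojInvAt b s ≠ b := fun h =>
  sprojInv_ne_one s (mul_eq_left.1 h)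

lemma sprojInvAt_injective (b : Circle) : Injective (sprojInvAt b) :=
  LeftInverse.injective (sprojAt_sprojInvAt b)

lemma range_sprojInvAt (b : Circle) : range (sprojInvAt b) = {b}ᶜ :=
  subset_antisymm (range_subset_iff.2 (sprojInvAt_ne b)) fun _ hz =>
    ⟨_, sprojInvAt_sprojAt hz⟩

lemma continuous_sprojInvAt (b : Circle) : Continuous (sprojInvAt b) :=
  continuous_const.mul continuous_sprojInv

lemma continuousOn_sprojAt (b : Circle) : ContinuousOn (sprojAt b) {b}ᶜ := fun _ hz =>
  ((continuousAt_sproj fun h => hz (inv_mul_eq_one.1 h).symm).comp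
    (continuous_const.mul continuous_id).continuousAt).continuousWithinAt

lemma sprojAt_sprojInvAt_sprojInvAt {s t : ℝ} (hst : s ≠ t) :
    sprojAt (sprojInvAt b s) (sprojInvAt b t) = sprojTransition s t := by
  rw [sprojAt, sprojInvAt, sprojInvAt, mul_inv_rev, mul_assoc, inv_mul_cancel_left,
    sproj_inv_mul_sprojInv hst]

lemma sprojAt_sprojInvAt_base (b : Circle) (s : ℝ) : sprojAt (sprojInvAt b s) b = -s := by
  rw [sprojAt, sprojInvAt, mul_inv_rev, inv_mul_cancel_right, sproj_inv, sproj_sprojInv]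

lemma mem_oInt_iff (huv : u ≠ v) : p ∈ oInt u v ↔ p ≠ u ∧ sprojAt u p < sprojAt u v :=
  ⟨fun ⟨hup, _, _, hlt⟩ => ⟨hup.symm, hlt⟩, fun ⟨hpu, hlt⟩ =>
    ⟨Ne.symm hpu, by rintro rfl; exact hlt.false, huv.symm, hlt⟩⟩

lemma left_notMem_oInt (u v : Circle) : u ∉ oInt u v := fun h => h.1 rfl

lemma right_notMem_oInt (u v : Circle) : v ∉ oInt u v := fun h => h.2.1 rfl

lemma sprojInvAt_image_Iio (b : Circle) (B : ℝ) :
    sprojInvAt b '' Iio B = oInt b (sprojInvAt b B) := by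
  ext z
  rw [mem_oInt_iff (sprojInvAt_ne b B).symm, sprojAt_sprojInvAt]
  constructor
  · rintro ⟨Z, hZ, rfl⟩
    exact ⟨sprojInvAt_ne b Z, by rwa [sprojAt_sprojInvAt]⟩
  · rintro ⟨hz, hlt⟩
    exact ⟨_, hlt, sprojInvAt_sprojAt hz⟩

lemma sprojInvAt_image_Ioi (b : Circle) (A : ℝ) :
    sprojInvAt b '' Ioi A = oInt (sprojInvAt b A) b := by
  ext z
  rw [mem_oInt_iff (sprojInvAt_ne b A), sprojAt_sprojInvAt_base]
  constructor
  · rintro ⟨Z, hZ, rfl⟩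
    refine ⟨(sprojInvAt_injective b).ne hZ.ne', ?_⟩
    rwa [sprojAt_sprojInvAt_sprojInvAt hZ.ne, sprojTransition_lt_neg_iff hZ.ne']
  · rintro ⟨hz, hlt⟩
    by_cases hzb : z = b
    · subst hzb
      rw [sprojAt_sprojInvAt_base] at hlt
      exact absurd hlt (lt_irrefl _)
    rw [← sprojInvAt_sprojAt hzb] at hz hlt ⊢
    have hne : sprojAt b z ≠ A := fun h => hz (by rw [h])
    rw [sprojAt_sprojInvAt_sprojInvAt hne.symm, sprojTransition_lt_neg_iff hne] at hlt
    exact mem_image_of_mem _ hlt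

lemma sprojInvAt_image_Ioo (hAB : A < B) :
    sprojInvAt b '' Ioo A B = oInt (sprojInvAt b A) (sprojInvAt b B) := by
  have hinj := sprojInvAt_injective b
  ext z
  rw [mem_oInt_iff (hinj.ne hAB.ne)]
  by_cases hzb : z = b
  · subst hzb
    rw [sprojAt_sprojInvAt_base, sprojAt_sprojInvAt_sprojInvAt hAB.ne,
      neg_lt_sprojTransition_iff hAB.ne']
    exact iff_of_false (fun ⟨_, _, h⟩ => sprojInvAt_ne _ _ h) fun h => h.2.not_gt hAB
  rw [← sprojInvAt_sprojAt hzb, hinj.mem_set_image, hinj.ne_iff]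
  by_cases hZA : sprojAt b z = A
  · simp [hZA]
  rw [sprojAt_sprojInvAt_sprojInvAt (Ne.symm hZA), sprojAt_sprojInvAt_sprojInvAt hAB.ne,
    sprojTransition_lt_sprojTransition_iff hAB hZA, mem_Ioo]
  exact ⟨fun h => ⟨hZA, h⟩, fun h => h.2⟩

lemma oInt_eq_image_Iio (huv : u ≠ v) : oInt u v = sprojInvAt u '' Iio (sprojAt u v) := by
  rw [sprojInvAt_image_Iio, sprojInvAt_sprojAt huv.symm]

lemma oInt_swap_eq_image_Ioi (huv : u ≠ v) :
    oInt v u = sprojInvAt u '' Ioi (sprojAt u v) := by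
  rw [sprojInvAt_image_Ioi, sprojInvAt_sprojAt huv.symm]

end Charts

section Intervals

variable {u v : Circle}

lemma isOpen_oInt (huv : u ≠ v) : IsOpen (oInt u v) := by
  have : oInt u v = {u}ᶜ ∩ sprojAt u ⁻¹' Iio (sprojAt u v) := by
    ext p
    exact mem_oInt_iff huv
  rw [this]
  exact (continuousOn_sprojAt u).isOpen_inter_preimage isOpen_compl_singleton isOpen_Iio

lemma oInt_nonempty (huv : u ≠ v) : (oInt u v).Nonempty := by
  rw [oInt_eq_image_Iio huv]
  exact nonempty_Iio.image _

lemma compl_oInt (huv : u ≠ v) : (oInt v u)ᶜ = insert u (insert v (oInt u v)) := by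
  rw [oInt_swap_eq_image_Ioi huv, (sprojInvAt_injective u).compl_image_eq, range_sprojInvAt,
    compl_compl, compl_Ioi, ← Iio_insert, image_insert_eq, sprojInvAt_sprojAt huv.symm,
    ← oInt_eq_image_Iio huv, union_singleton]

lemma left_mem_closure_oInt (huv : u ≠ v) : u ∈ closure (oInt u v) := by
  have h := mem_closure_image (continuous_sprojInvAt v).continuousAt
    (by rw [closure_Ioi]; exact self_mem_Ici : sprojAt v u ∈ closure (Ioi (sprojAt v u)))
  rwa [sprojInvAt_image_Ioi, sprojInvAt_sprojAt huv] at h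

lemma right_mem_closure_oInt (huv : u ≠ v) : v ∈ closure (oInt u v) := by
  have h := mem_closure_image (continuous_sprojInvAt u).continuousAt
    (by rw [closure_Iio]; exact self_mem_Iic : sprojAt u v ∈ closure (Iio (sprojAt u v)))
  rwa [sprojInvAt_image_Iio, sprojInvAt_sprojAt huv.symm] at h

lemma closure_oInt (huv : u ≠ v) : closure (oInt u v) = (oInt v u)ᶜ := by
  rw [compl_oInt huv]
  refine subset_antisymm (closure_minimal ?_ ?_) ?_
  · exact (subset_insert _ _).trans (subset_insert _ _)
  · rw [← compl_oInt huv]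
    exact (isOpen_oInt huv.symm).isClosed_compl
  · exact insert_subset (left_mem_closure_oInt huv)
      (insert_subset (right_mem_closure_oInt huv) subset_closure)

lemma dual_oInt (huv : u ≠ v) : dual (oInt u v) = oInt v u := by
  rw [dual, interior_compl, closure_oInt huv, compl_compl]

end Intervals

section Dual

variable {M N : Set Circle} {x : Circle}

lemma mem_dual_iff : x ∈ dual M ↔ x ∉ closure M := by
  rw [dual, interior_compl, mem_compl_iff]

lemma disjoint_dual (M : Set Circle) : Disjoint M (dual M) :=
  disjoint_compl_right.mono_right interior_subset

lemma notMem_dual_of_mem (hx : x ∈ M) : x ∉ dual M :=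
  (disjoint_dual M).notMem_of_mem_left hx

lemma dual_subset_dual (h : M ⊆ N) : dual N ⊆ dual M :=
  interior_mono (compl_subset_compl.2 h)

lemma closure_dual_subset (hM : IsOpen M) : closure (dual M) ⊆ Mᶜ :=
  closure_minimal interior_subset hM.isClosed_compl

lemma mem_closure_or_mem_closure_dual (M : Set Circle) (x : Circle) :
    x ∈ closure M ∨ x ∈ closure (dual M) :=
  or_iff_not_imp_left.2 fun h => subset_closure (mem_dual_iff.2 h)

lemma subset_dual_of_disjoint (hM : IsOpen M) (h : Disjoint M N) : M ⊆ dual N :=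
  interior_maximal (subset_compl_iff_disjoint_right.2 h) hM

end Dual

namespace IsND

variable {M N : Set Circle} {b : Circle}

lemma isOpen (hM : IsND M) : IsOpen M := by
  obtain ⟨u, v, huv, rfl⟩ := hM
  exact isOpen_oInt huv

lemma nonempty (hM : IsND M) : M.Nonempty := by
  obtain ⟨u, v, huv, rfl⟩ := hM
  exact oInt_nonempty huv

lemma dual (hM : IsND M) : IsND (_root_.dual M) := by
  obtain ⟨u, v, huv, rfl⟩ := hM
  exact ⟨v, u, huv.symm, dual_oInt huv⟩

lemma dual_dual (hM : IsND M) : _root_.dual (_root_.dual M) = M := by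
  obtain ⟨u, v, huv, rfl⟩ := hM
  rw [dual_oInt huv, dual_oInt huv.symm]

lemma interior_closure (hM : IsND M) : interior (closure M) = M := by
  have h := hM.dual_dual
  rwa [_root_.dual, _root_.dual, ← closure_compl, compl_compl] at h

lemma not_subsingleton_compl (hM : IsND M) : ¬ Mᶜ.Subsingleton := by
  obtain ⟨u, v, huv, rfl⟩ := hM
  exact fun h => huv (h (left_notMem_oInt u v) (right_notMem_oInt u v))

lemma nonempty_diff_closure (hM : IsND M) (hN : IsOpen N) (hMN : M ⊂ N) :
    (N \ closure M).Nonempty := by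
  rw [nonempty_iff_ne_empty, Ne, sdiff_eq_empty]
  exact fun h => hMN.not_subset (hM.interior_closure ▸ interior_maximal h hN)

lemma exists_eq_image_Ioo (hM : IsND M) (hb : b ∉ closure M) :
    ∃ A B, A < B ∧ M = sprojInvAt b '' Ioo A B := by
  obtain ⟨u, v, huv, rfl⟩ := hM
  simp only [closure_oInt huv, mem_compl_iff, not_not] at hb
  have hub : u ≠ b := hb.2.1.symm
  have hvb : v ≠ b := hb.1
  rw [← sprojInvAt_sprojAt hub, ← sprojInvAt_sprojAt hvb] at hb ⊢
  have hne : sprojAt b u ≠ sprojAt b v := fun h =>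
    huv (by rw [← sprojInvAt_sprojAt hub, h, sprojInvAt_sprojAt hvb])
  rcases hne.lt_or_gt with h | h
  · exact ⟨_, _, h, (sprojInvAt_image_Ioo h).symm⟩
  · rw [← sprojInvAt_image_Ioo h] at hb
    exact absurd hb fun ⟨_, _, h⟩ => sprojInvAt_ne _ _ h

end IsND

lemma IsOpen.eq_Ioo_or_Iio_or_Ioi_or_univ {α : Type*} [ConditionallyCompleteLinearOrder α]
    [TopologicalSpace α] [OrderTopology α] [DenselyOrdered α] [NoMaxOrder α] [NoMinOrder α]
    {T : Set α} (hT : IsOpen T) (hc : IsPreconnected T) (hne : T.Nonempty) :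
    (∃ A B, A < B ∧ T = Ioo A B) ∨ (∃ B, T = Iio B) ∨ (∃ A, T = Ioi A) ∨ T = univ := by
  have above : ∀ a ∈ T, ∃ c ∈ T, a < c := fun a ha =>
    let ⟨c, hac, hc⟩ := Filter.Eventually.exists_gt (hT.mem_nhds ha); ⟨c, hc, hac⟩
  have below : ∀ a ∈ T, ∃ c ∈ T, c < a := fun a ha =>
    let ⟨c, hca, hc⟩ := Filter.Eventually.exists_lt (hT.mem_nhds ha); ⟨c, hc, hca⟩
  set a := sInf T
  set b := sSup T
  rcases hc.mem_intervals with h | h | h | h | h | h | h | h | h | h <;>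
    rw [h] at above below hne
  · obtain ⟨c, hc, hbc⟩ := above b ⟨nonempty_Icc.1 hne, le_rfl⟩
    exact absurd hc.2 hbc.not_ge
  · obtain ⟨c, hc, hca⟩ := below a ⟨le_rfl, nonempty_Ico.1 hne⟩
    exact absurd hc.1 hca.not_ge
  · obtain ⟨c, hc, hbc⟩ := above b ⟨nonempty_Ioc.1 hne, le_rfl⟩
    exact absurd hc.2 hbc.not_ge
  · obtain ⟨c, hac, hcb⟩ := hne
    exact Or.inl ⟨a, b, hac.trans hcb, h⟩
  · obtain ⟨c, hc, hca⟩ := below a self_mem_Ici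
    exact absurd hc hca.not_ge
  · exact Or.inr (Or.inr (Or.inl ⟨a, h⟩))
  · obtain ⟨c, hc, hbc⟩ := above b self_mem_Iic
    exact absurd hc hbc.not_ge
  · exact Or.inr (Or.inl ⟨b, h⟩)
  · exact Or.inr (Or.inr (Or.inr h))
  · exact absurd hne not_nonempty_empty

section UnionsOfIntervals

variable {𝒞 : Set (Set Circle)} {b x : Circle}

theorem isND_sUnion_or_eq_compl_singleton (hnd : ∀ M ∈ 𝒞, IsND M)
    (hb : ∀ M ∈ 𝒞, b ∉ closure M) (hx : ∀ M ∈ 𝒞, x ∈ M) (hne : 𝒞.Nonempty) :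
    IsND (⋃₀ 𝒞) ∨ ⋃₀ 𝒞 = {b}ᶜ := by
  have hinj : Injective (sprojInvAt b) := sprojInvAt_injective b
  have hrange : ⋃₀ 𝒞 ⊆ range (sprojInvAt b) := by
    rintro z ⟨M, hM, hz⟩
    rw [range_sprojInvAt]
    rintro rfl
    exact hb M hM (subset_closure hz)
  have hxb : x ≠ b := fun h => hb _ hne.some_mem (h ▸ subset_closure (hx _ hne.some_mem))
  -- In the chart at `b` the union becomes an open connected subset of `ℝ`.
  have hopen : IsOpen (sprojInvAt b ⁻¹' ⋃₀ 𝒞) :=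
    (isOpen_sUnion fun M hM => (hnd M hM).isOpen).preimage (continuous_sprojInvAt b)
  have hconn : IsPreconnected (sprojInvAt b ⁻¹' ⋃₀ 𝒞) := by
    rw [preimage_sUnion, ← sUnion_image]
    refine isPreconnected_sUnion (sprojAt b x) _ ?_ ?_ <;> rintro _ ⟨M, hM, rfl⟩
    · rw [mem_preimage, sprojInvAt_sprojAt hxb]
      exact hx M hM
    · obtain ⟨A, B, -, rfl⟩ := (hnd M hM).exists_eq_image_Ioo (hb M hM)
      rw [hinj.preimage_image]
      exact isPreconnected_Ioo
  have hTne : (sprojInvAt b ⁻¹' ⋃₀ 𝒞).Nonempty := ⟨sprojAt b x, by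
    rw [mem_preimage, sprojInvAt_sprojAt hxb]
    exact ⟨_, hne.some_mem, hx _ hne.some_mem⟩⟩
  rw [← image_preimage_eq_of_subset hrange]
  rcases hopen.eq_Ioo_or_Iio_or_Ioi_or_univ hconn hTne with ⟨A, B, hAB, h⟩ | ⟨B, h⟩ | ⟨A, h⟩ | h <;>
    rw [h]
  · exact Or.inl ⟨_, _, hinj.ne hAB.ne, sprojInvAt_image_Ioo hAB⟩
  · exact Or.inl ⟨_, _, (sprojInvAt_ne b B).symm, sprojInvAt_image_Iio b B⟩
  · exact Or.inl ⟨_, _, sprojInvAt_ne b A, sprojInvAt_image_Ioi b A⟩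
  · exact Or.inr (by rw [image_univ, range_sprojInvAt])

theorem isND_sUnion_of_subset {D : Set Circle} (hnd : ∀ M ∈ 𝒞, IsND M)
    (hb : ∀ M ∈ 𝒞, b ∉ closure M) (hx : ∀ M ∈ 𝒞, x ∈ M) (hne : 𝒞.Nonempty) (hD : IsND D)
    (hsub : ∀ M ∈ 𝒞, M ⊆ D) : IsND (⋃₀ 𝒞) := by
  refine (isND_sUnion_or_eq_compl_singleton hnd hb hx hne).resolve_right fun h => ?_
  refine hD.not_subsingleton_compl ((subsingleton_singleton (a := b)).anti ?_)
  rw [compl_subset_comm, ← h]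
  exact sUnion_subset hsub

end UnionsOfIntervals

section Laminar

variable {α : Type*} {𝒜 : Set (Set α)} {A : Set α} {x y z : α}

def IsLaminar (𝒜 : Set (Set α)) : Prop :=
  ∀ A ∈ 𝒜, ∀ B ∈ 𝒜, (A ∩ B).Nonempty → A ⊆ B ∨ B ⊆ A

def component (𝒜 : Set (Set α)) (x : α) : Set α := ⋃₀ {A ∈ 𝒜 | x ∈ A}

def components (𝒜 : Set (Set α)) : Set (Set α) := component 𝒜 '' ⋃₀ 𝒜

lemma subset_component (hA : A ∈ 𝒜) (hx : x ∈ A) : A ⊆ component 𝒜 x :=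
  subset_sUnion_of_mem ⟨hA, hx⟩

lemma IsLaminar.isChain (h : IsLaminar 𝒜) (x : α) : IsChain (· ⊆ ·) {A ∈ 𝒜 | x ∈ A} :=
  fun A hA B hB _ => h A hA.1 B hB.1 ⟨x, hA.2, hB.2⟩

lemma IsLaminar.component_subset (h : IsLaminar 𝒜) (hA : A ∈ 𝒜) (hx : x ∈ A) (hy : y ∈ A) :
    component 𝒜 y ⊆ component 𝒜 x := by
  rintro z ⟨B, ⟨hB, hyB⟩, hzB⟩
  rcases h B hB A hA ⟨y, hyB, hy⟩ with hBA | hAB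
  · exact subset_component hA hx (hBA hzB)
  · exact subset_component hB (hAB hx) hzB

lemma IsLaminar.component_eq (h : IsLaminar 𝒜) (hA : A ∈ 𝒜) (hx : x ∈ A) (hy : y ∈ A) :
    component 𝒜 y = component 𝒜 x :=
  (h.component_subset hA hx hy).antisymm (h.component_subset hA hy hx)

lemma IsLaminar.exists_mem_of_mem_component (h : IsLaminar 𝒜) (hy : y ∈ component 𝒜 x)
    (hz : z ∈ component 𝒜 x) : ∃ A ∈ 𝒜, x ∈ A ∧ y ∈ A ∧ z ∈ A := by
  obtain ⟨B, ⟨hB, hxB⟩, hyB⟩ := hy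
  obtain ⟨C, ⟨hC, hxC⟩, hzC⟩ := hz
  rcases h B hB C hC ⟨x, hxB, hxC⟩ with hBC | hCB
  · exact ⟨C, hC, hxC, hBC hyB, hzC⟩
  · exact ⟨B, hB, hxB, hyB, hCB hzC⟩

lemma IsLaminar.eq_of_mem_components (h : IsLaminar 𝒜) {S T : Set α} (hS : S ∈ components 𝒜)
    (hT : T ∈ components 𝒜) (hST : (S ∩ T).Nonempty) : S = T := by
  obtain ⟨x, -, rfl⟩ := hS
  obtain ⟨y, -, rfl⟩ := hT
  obtain ⟨z, hzx, hzy⟩ := hST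
  obtain ⟨A, hA, hxA, hzA, -⟩ := h.exists_mem_of_mem_component hzx hzx
  obtain ⟨B, hB, hyB, hzB, -⟩ := h.exists_mem_of_mem_component hzy hzy
  rw [h.component_eq hA hzA hxA, h.component_eq hB hzB hyB]

end Laminar

lemma LiesOn.mono {M A B : Set Circle} (h : LiesOn M A) (hAB : A ⊆ B) : LiesOn M B :=
  h.imp (·.trans hAB) (·.trans hAB)

lemma dual_mem_leafOf {W A : Set Circle} (hW : IsND W) (hA : A ∈ leafOf W) :
    dual A ∈ leafOf W := by
  rcases hA with rfl | rfl
  · exact Or.inr rfl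
  · rw [hW.dual_dual]
    exact Or.inl rfl

def avoiding (L : Set (Set Circle)) (q : Circle) : Set (Set Circle) := {M ∈ L | q ∉ closure M}

def subleaves (L : Set (Set Circle)) (N : Set Circle) : Set (Set Circle) :=
  insert (dual N) {C ∈ L | C ⊂ N}

lemma component_subleaves_of_mem_dual {L : Set (Set Circle)} {N : Set Circle} {x : Circle}
    (hx : x ∈ dual N) : component (subleaves L N) x = dual N := by
  refine subset_antisymm (sUnion_subset ?_) (subset_component (Or.inl rfl) hx)
  rintro A ⟨rfl | ⟨-, hAN⟩, hxA⟩
  · exact subset_rfl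
  · exact absurd hx (notMem_dual_of_mem (hAN.subset hxA))

namespace LamSys

variable {L : Set (Set Circle)} {I J M M' M₁ M₂ N U : Set Circle} {b q x y z : Circle}

theorem subset_or_subset (hL : LamSys L) (hM : M ∈ L) (hM' : M' ∈ L) (hx : x ∈ M)
    (hx' : x ∈ M') (hb : b ∉ closure M) (hb' : b ∉ closure M') : M ⊆ M' ∨ M' ⊆ M := by
  rcases hL.unlinked M hM M' hM' with (h | h) | (h | h)
  · exact Or.inl h
  · exact (hb' (closure_mono h ((mem_closure_or_mem_closure_dual M b).resolve_left hb))).elim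
  · exact (notMem_dual_of_mem hx' (h hx)).elim
  · right
    simpa only [(hL.nd M hM).dual_dual, (hL.nd M' hM').dual_dual] using dual_subset_dual h

theorem sUnion_mem (hL : LamSys L) {𝒞 : Set (Set Circle)} (h𝒞 : 𝒞 ⊆ L)
    (hchain : IsChain (· ⊆ ·) 𝒞) (hnd : IsND (⋃₀ 𝒞)) : ⋃₀ 𝒞 ∈ L := by
  obtain ⟨T, hTc, hT𝒞, hTU⟩ :=
    TopologicalSpace.isOpen_sUnion_countable 𝒞 fun M hM => (hL.nd M (h𝒞 hM)).isOpen
  have hTne : T.Nonempty := by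
    rw [nonempty_iff_ne_empty]
    rintro rfl
    rw [sUnion_empty] at hTU
    exact hnd.nonempty.ne_empty hTU.symm
  obtain ⟨f, rfl⟩ := hTc.exists_eq_range hTne
  have hdir : Directed (· ⊆ ·) f := fun m n =>
    (hchain.total (hT𝒞 ⟨m, rfl⟩) (hT𝒞 ⟨n, rfl⟩)).elim (fun h => ⟨n, h, subset_rfl⟩)
      fun h => ⟨m, subset_rfl, h⟩
  have hU : ⋃ n, f (hdir.sequence f n) = ⋃₀ 𝒞 := by
    rw [← hTU, sUnion_range]
    exact subset_antisymm (iUnion_mono' fun n => ⟨_, subset_rfl⟩)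
      (iUnion_mono' fun n => ⟨n + 1, hdir.rel_sequence n⟩)
  rw [← hU]
  exact hL.chainUnion _ (fun n => h𝒞 (hT𝒞 ⟨_, rfl⟩)) hdir.sequence_mono_nat (hU ▸ hnd)

lemma mem_closure_iff_of_notMem_ELset (hL : LamSys L) (hU : U ∈ L) (hq : q ∉ ELset L) :
    q ∈ closure U ↔ q ∈ U := by
  refine ⟨fun h => ?_, fun h => subset_closure h⟩
  rw [closure_eq_interior_union_frontier, (hL.nd U hU).isOpen.interior_eq] at h
  exact h.resolve_right fun h' => hq (mem_biUnion hU h')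

theorem isGap_components {𝒜 : Set (Set Circle)} (hL : LamSys L) (h𝒜L : 𝒜 ⊆ L)
    (hlam : IsLaminar 𝒜) (hmem : ∀ x ∈ ⋃₀ 𝒜, component 𝒜 x ∈ L)
    (hcover : ∀ M ∈ L, ∃ A ∈ 𝒜, LiesOn M A) : IsGap L (components 𝒜) := by
  refine ⟨?_, fun S hS T hT hST => ?_, fun M hM => ?_⟩
  · rintro _ ⟨x, hx, rfl⟩
    exact hmem x hx
  · exact not_nonempty_iff_eq_empty.1 fun h => hST (hlam.eq_of_mem_components hS hT h)
  · obtain ⟨A, hA, hMA⟩ := hcover M hM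
    obtain ⟨x, hx⟩ := (hL.nd A (h𝒜L hA)).nonempty
    exact ⟨_, ⟨x, ⟨A, hA, hx⟩, rfl⟩, hMA.mono (subset_component hA hx)⟩

lemma isLaminar_avoiding (hL : LamSys L) (q : Circle) : IsLaminar (avoiding L q) :=
  fun _ hM _ hM' ⟨_, hx, hx'⟩ => hL.subset_or_subset hM.1 hM'.1 hx hx' hM.2 hM'.2

lemma component_avoiding_mem_or_eq (hL : LamSys L) (hqE : q ∉ ELset L)
    (hx : x ∈ ⋃₀ avoiding L q) :
    (component (avoiding L q) x ∈ L ∧ q ∉ closure (component (avoiding L q) x)) ∨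
      component (avoiding L q) x = {q}ᶜ := by
  obtain ⟨A, hA, hxA⟩ := hx
  refine (isND_sUnion_or_eq_compl_singleton (𝒞 := {M ∈ avoiding L q | x ∈ M}) (b := q)
    (fun M hM => hL.nd M hM.1.1) (fun M hM => hM.1.2) (fun M hM => hM.2)
    ⟨A, hA, hxA⟩).imp_left fun hnd => ?_
  have hmem := hL.sUnion_mem (fun M hM => hM.1.1) ((hL.isLaminar_avoiding q).isChain x) hnd
  refine ⟨hmem, fun hq => ?_⟩
  obtain ⟨M, hM, hqM⟩ := (hL.mem_closure_iff_of_notMem_ELset hmem hqE).1 hq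
  exact hM.1.2 (subset_closure hqM)

theorem separatedPair_of_forall_component (hL : LamSys L) (hqE : q ∉ ELset L)
    (hcomp : ∀ x ∈ ⋃₀ avoiding L q,
      component (avoiding L q) x ∈ L ∧ q ∉ closure (component (avoiding L q) x))
    (hI : I ∈ L) (hJ : J ∈ L) (hqI : q ∉ closure I) (hqJ : q ∉ closure J) :
    SeparatedPair L I J := by
  have hgap : IsGap L (components (avoiding L q)) := by
    refine hL.isGap_components (fun M hM => hM.1) (hL.isLaminar_avoiding q)
      (fun x hx => (hcomp x hx).1) fun M hM => ?_
    by_cases hq : q ∈ closure M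
    · refine ⟨dual M, ⟨hL.dualMem M hM, fun h => ?_⟩, Or.inr subset_rfl⟩
      exact closure_dual_subset (hL.nd M hM).isOpen h
        ((hL.mem_closure_iff_of_notMem_ELset hM hqE).1 hq)
    · exact ⟨M, ⟨hM, hq⟩, Or.inl subset_rfl⟩
  have havoid : ∀ S ∈ components (avoiding L q), q ∉ closure S := by
    rintro _ ⟨x, hx, rfl⟩
    exact (hcomp x hx).2
  obtain ⟨xI, hxI⟩ := (hL.nd I hI).nonempty
  obtain ⟨xJ, hxJ⟩ := (hL.nd J hJ).nonempty
  refine ⟨_, hgap, ?_, _, ⟨xI, ⟨I, ⟨hI, hqI⟩, hxI⟩, rfl⟩, _, ⟨xJ, ⟨J, ⟨hJ, hqJ⟩, hxJ⟩, rfl⟩,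
    subset_component ⟨hI, hqI⟩ hxI, subset_component ⟨hJ, hqJ⟩ hxJ⟩
  rintro ⟨W, hW⟩
  rcases mem_closure_or_mem_closure_dual W q with h | h
  · exact havoid W (hW ▸ Or.inl rfl) h
  · exact havoid (dual W) (hW ▸ Or.inr rfl) h

theorem exists_ssubset_of_component_eq (hL : LamSys L)
    (hC : component (avoiding L q) x = {q}ᶜ) {K : Set Circle} (hK : IsCompact K)
    (hqK : q ∉ K) : ∃ M₁ ∈ L, ∃ M₂ ∈ L, K ⊆ M₁ ∧ M₁ ⊂ M₂ := by
  set 𝒞 := {A ∈ avoiding L q | x ∈ A}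
  have hchain : IsChain (· ⊆ ·) 𝒞 := (hL.isLaminar_avoiding q).isChain x
  have hne : Nonempty 𝒞 := by
    obtain ⟨A, hA, -⟩ : -q ∈ ⋃₀ 𝒞 := by
      rw [← component, hC]
      exact Circle.neg_ne_self q
    exact ⟨⟨A, hA⟩⟩
  obtain ⟨⟨M₁, hM₁⟩, hKM₁⟩ := hK.elim_directed_cover (fun A : 𝒞 => (A : Set Circle))
    (fun A => (hL.nd A A.2.1.1).isOpen)
    (by rw [← sUnion_eq_iUnion, ← component, hC]; exact subset_compl_singleton_iff.2 hqK)
    hchain.directedOn.directed_val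
  obtain ⟨z, hzM₁, hzq⟩ : ∃ z ∉ M₁, z ≠ q := by
    obtain ⟨a, ha, c, hc, hac⟩ :=
      not_subsingleton_iff.1 (hL.nd M₁ hM₁.1.1).not_subsingleton_compl
    by_cases haq : a = q
    · exact ⟨c, hc, haq ▸ hac.symm⟩
    · exact ⟨a, ha, haq⟩
  obtain ⟨M₂, hM₂, hzM₂⟩ : z ∈ ⋃₀ 𝒞 := by
    rw [← component, hC]
    exact hzq
  refine ⟨M₁, hM₁.1.1, M₂, hM₂.1.1, hKM₁, ?_⟩
  rcases hchain.total hM₁ hM₂ with h | h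
  · exact ⟨h, fun h' => hzM₁ (h' hzM₂)⟩
  · exact absurd (h hzM₂) hzM₁

lemma isLaminar_subleaves (hL : LamSys L) (hN : N ∈ L) : IsLaminar (subleaves L N) := by
  obtain ⟨b, hb⟩ := (hL.nd N hN).dual.nonempty
  have hbC : ∀ C ⊆ N, b ∉ closure C := fun C hC h => mem_dual_iff.1 hb (closure_mono hC h)
  rintro A (rfl | ⟨hA, hAN⟩) B (rfl | ⟨hB, hBN⟩) ⟨w, hwA, hwB⟩
  · exact Or.inl subset_rfl
  · exact absurd hwA (notMem_dual_of_mem (hBN.subset hwB))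
  · exact absurd hwB (notMem_dual_of_mem (hAN.subset hwA))
  · exact hL.subset_or_subset hA hB hwA hwB (hbC A hAN.subset) (hbC B hBN.subset)

lemma component_subleaves_mem (hL : LamSys L) (hN : N ∈ L) (hx : x ∈ ⋃₀ subleaves L N) :
    component (subleaves L N) x ∈ L := by
  by_cases hxN : x ∈ dual N
  · rw [component_subleaves_of_mem_dual hxN]
    exact hL.dualMem N hN
  obtain ⟨A, hA, hxA⟩ := hx
  have hsub : ∀ C ∈ {C ∈ subleaves L N | x ∈ C}, C ∈ L ∧ C ⊆ N := by
    rintro C ⟨rfl | hC, hxC⟩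
    · exact absurd hxC hxN
    · exact ⟨hC.1, hC.2.subset⟩
  obtain ⟨b, hb⟩ := (hL.nd N hN).dual.nonempty
  refine hL.sUnion_mem (fun C hC => (hsub C hC).1) ((hL.isLaminar_subleaves hN).isChain x) ?_
  exact isND_sUnion_of_subset (b := b) (x := x) (fun C hC => hL.nd C (hsub C hC).1)
    (fun C hC h => mem_dual_iff.1 hb (closure_mono (hsub C hC).2 h)) (fun C hC => hC.2)
    ⟨A, hA, hxA⟩ (hL.nd N hN) fun C hC => (hsub C hC).2

lemma isGap_subleaves (hL : LamSys L) (hN : N ∈ L) :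
    IsGap L (components (subleaves L N)) := by
  refine hL.isGap_components ?_ (hL.isLaminar_subleaves hN)
    (fun x hx => hL.component_subleaves_mem hN hx) fun M hM => ?_
  · rintro A (rfl | hA)
    exacts [hL.dualMem N hN, hA.1]
  rcases hL.unlinked M hM N hN with (h | h) | h
  · by_cases hMN : M = N
    · exact ⟨dual N, Or.inl rfl, Or.inr (hMN ▸ subset_rfl)⟩
    · exact ⟨M, Or.inr ⟨hM, h.ssubset_of_ne hMN⟩, Or.inl subset_rfl⟩
  · by_cases hMN : dual M = N
    · exact ⟨dual N, Or.inl rfl, Or.inl (by rw [← hMN, (hL.nd M hM).dual_dual])⟩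
    · exact ⟨dual M, Or.inr ⟨hL.dualMem M hM, h.ssubset_of_ne hMN⟩, Or.inr subset_rfl⟩
  · exact ⟨dual N, Or.inl rfl, h⟩

theorem exists_ssubset_of_not_separated (hL : LamSys L) (hN : N ∈ L) (hIN : I ⊆ dual N)
    (hJN : J ⊆ dual N) (hns : ¬ SeparatedPair L I J) (hy : y ∈ N) (hz : z ∈ N) :
    ∃ C ∈ L, C ⊂ N ∧ y ∈ C ∧ z ∈ C := by
  obtain ⟨b, hb⟩ := (hL.nd N hN).dual.nonempty
  have hgap := hL.isGap_subleaves hN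
  have hdualN : dual N ∈ components (subleaves L N) :=
    ⟨b, ⟨_, Or.inl rfl, hb⟩, component_subleaves_of_mem_dual hb⟩
  obtain ⟨W, hW⟩ : IsLeafGap (components (subleaves L N)) := by
    by_contra hnl
    exact hns ⟨_, hgap, hnl, _, hdualN, _, hdualN, hIN, hJN⟩
  have hWnd : IsND W := hL.nd W (hgap.1 (hW ▸ Or.inl rfl))
  obtain ⟨x, -, hxN⟩ : N ∈ components (subleaves L N) := by
    rw [hW] at hdualN ⊢
    simpa only [(hL.nd N hN).dual_dual] using dual_mem_leafOf hWnd hdualN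
  rw [← hxN] at hy hz
  obtain ⟨A, rfl | hA, -, hyA, hzA⟩ :=
    (hL.isLaminar_subleaves hN).exists_mem_of_mem_component hy hz
  · rw [hxN] at hy
    exact absurd hyA (notMem_dual_of_mem hy)
  · exact ⟨A, hA.1, hA.2, hyA, hzA⟩

theorem exists_isGreatest (hL : LamSys L) (hqE : q ∉ ELset L) (hM₁ : M₁ ∈ L) (hM₂ : M₂ ∈ L)
    (h12 : M₁ ⊆ M₂) (hq : q ∉ closure M₁) :
    ∃ Ω, IsGreatest {D ∈ L | M₁ ⊆ D ∧ D ⊆ M₂ ∧ q ∉ closure D} Ω := by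
  set 𝒮 := {D ∈ L | M₁ ⊆ D ∧ D ⊆ M₂ ∧ q ∉ closure D}
  obtain ⟨y, hy⟩ := (hL.nd M₁ hM₁).nonempty
  obtain ⟨b, hb⟩ := (hL.nd M₂ hM₂).dual.nonempty
  have hbD : ∀ D ∈ 𝒮, b ∉ closure D := fun D hD h =>
    mem_dual_iff.1 hb (closure_mono hD.2.2.1 h)
  have hchain : IsChain (· ⊆ ·) 𝒮 := fun D hD D' hD' _ =>
    hL.subset_or_subset hD.1 hD'.1 (hD.2.1 hy) (hD'.2.1 hy) (hbD D hD) (hbD D' hD')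
  have hΩ : ⋃₀ 𝒮 ∈ L := hL.sUnion_mem (fun D hD => hD.1) hchain <|
    isND_sUnion_of_subset (fun D hD => hL.nd D hD.1) hbD (fun D hD => hD.2.1 hy)
      ⟨M₁, hM₁, subset_rfl, h12, hq⟩ (hL.nd M₂ hM₂) fun D hD => hD.2.2.1
  refine ⟨⋃₀ 𝒮, ⟨hΩ, subset_sUnion_of_mem ⟨hM₁, subset_rfl, h12, hq⟩,
    sUnion_subset fun D hD => hD.2.2.1, fun h => ?_⟩, fun D hD => subset_sUnion_of_mem hD⟩
  obtain ⟨D, hD, hqD⟩ := (hL.mem_closure_iff_of_notMem_ELset hΩ hqE).1 h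
  exact hD.2.2.2 (subset_closure hqD)

theorem separatedPair_of_ssubset (hL : LamSys L) (hE : Dense (ELset L)ᶜ) (hM₁ : M₁ ∈ L)
    (hM₂ : M₂ ∈ L) (h12 : M₁ ⊂ M₂) (hI : I ⊆ M₁) (hJ : J ⊆ M₁) : SeparatedPair L I J := by
  by_contra hns
  obtain ⟨q, hqE, hqM₂, hqM₁⟩ :=
    hE.exists_mem_open ((hL.nd M₂ hM₂).isOpen.sdiff isClosed_closure)
      ((hL.nd M₁ hM₁).nonempty_diff_closure (hL.nd M₂ hM₂).isOpen h12)
  obtain ⟨Ω, ⟨hΩ, hM₁Ω, hΩM₂, hqΩ⟩, hmax⟩ := hL.exists_isGreatest hqE hM₁ hM₂ h12.subset hqM₁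
  have hΩΩ := (hL.nd Ω hΩ).dual_dual
  obtain ⟨b, hb⟩ := (hL.nd M₂ hM₂).dual.nonempty
  obtain ⟨C, hC, hCΩ, hqC, hbC⟩ := hL.exists_ssubset_of_not_separated (hL.dualMem Ω hΩ)
    (by rw [hΩΩ]; exact hI.trans hM₁Ω) (by rw [hΩΩ]; exact hJ.trans hM₁Ω) hns
    (mem_dual_iff.2 hqΩ) (dual_subset_dual hΩM₂ hb)
  obtain ⟨y, hy⟩ := (hL.nd M₁ hM₁).nonempty
  have hyC : y ∉ closure C := fun h =>
    closure_dual_subset (hL.nd Ω hΩ).isOpen (closure_mono hCΩ.subset h) (hM₁Ω hy)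
  have hyM₂ : y ∉ closure (dual M₂) := fun h =>
    closure_dual_subset (hL.nd M₂ hM₂).isOpen h (h12.subset hy)
  have hM₂C : dual M₂ ⊆ C :=
    (hL.subset_or_subset hC (hL.dualMem M₂ hM₂) hbC hb hyC hyM₂).resolve_left fun h =>
      notMem_dual_of_mem hqM₂ (h hqC)
  -- `dual C` lies between `M₁` and `M₂` and its closure misses `q`, against the maximality of `Ω`.
  have hCΩ' : dual C ⊆ Ω := hmax
    ⟨hL.dualMem C hC, hM₁Ω.trans (hΩΩ ▸ dual_subset_dual hCΩ.subset),
      (hL.nd M₂ hM₂).dual_dual ▸ dual_subset_dual hM₂C,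
      fun h => closure_dual_subset (hL.nd C hC).isOpen h hqC⟩
  exact hCΩ.not_subset ((hL.nd C hC).dual_dual ▸ dual_subset_dual hCΩ')

theorem totDisc_of_dense_compl_ELset (hL : LamSys L) (hE : Dense (ELset L)ᶜ) :
    TotDisc L := by
  rintro I J ⟨hI, hJ, hIJ, hJI⟩
  have hJI' : J ⊂ dual I :=
    (subset_dual_of_disjoint (hL.nd J hJ).isOpen
      (disjoint_iff_inter_eq_empty.2 (inter_comm I J ▸ hIJ))).ssubset_of_ne hJI
  obtain ⟨q, hqE, hqI, hqJ⟩ := hE.exists_mem_open (isOpen_interior.sdiff isClosed_closure)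
    ((hL.nd J hJ).nonempty_diff_closure isOpen_interior hJI')
  replace hqI : q ∉ closure I := mem_dual_iff.1 hqI
  by_cases hC : ∃ x ∈ ⋃₀ avoiding L q, component (avoiding L q) x = {q}ᶜ
  swap
  · exact hL.separatedPair_of_forall_component hqE
      (fun x hx => (hL.component_avoiding_mem_or_eq hqE hx).resolve_right fun h =>
        hC ⟨x, hx, h⟩)
      hI hJ hqI hqJ
  obtain ⟨x, -, hC⟩ := hC
  obtain ⟨M₁, hM₁, M₂, hM₂, hK, h12⟩ :=
    hL.exists_ssubset_of_component_eq hC (K := closure I ∪ closure J)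
      (isClosed_closure.isCompact.union isClosed_closure.isCompact)
      (by rintro (h | h) <;> contradiction)
  exact hL.separatedPair_of_ssubset hE hM₁ hM₂ h12
    (subset_closure.trans (subset_union_left.trans hK))
    (subset_closure.trans (subset_union_right.trans hK))

end LamSys

end

/-- Two dense lamination systems with disjoint endpoint sets are totally disconnected. -/
theorem stmt13 (L₁ L₂ : Set (Set Circle)) (h₁ : LamSys L₁) (h₂ : LamSys L₂)
    (hd₁ : Dense (ELset L₁)) (hd₂ : Dense (ELset L₂))
    (hdisj : ELset L₁ ∩ ELset L₂ = ∅) :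
    TotDisc L₁ ∧ TotDisc L₂ := by
  have hdisj' : Disjoint (ELset L₁) (ELset L₂) := disjoint_iff_inter_eq_empty.2 hdisj
  exact ⟨h₁.totDisc_of_dense_compl_ELset (hd₂.mono hdisj'.subset_compl_left),
    h₂.totDisc_of_dense_compl_ELset (hd₁.mono hdisj'.subset_compl_right)⟩
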